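/- For every n divisible by 3, the complete balanced tripartite graph K_{n/3,n/3,n/3} is K_4-free, and for every balanced bipartition of its vertex set into parts of sizes ⌈n/2⌉ and ⌊n/2⌋, the number of edges lying inside the two parts is at least n^2/9; hence the bound n^2/9 in the main theorem cannot be improved. -/

import Mathlib

/-- The complete balanced tripartite graph on `Fin n` (for `3 ∣ n`), with the
three classes given by residues modulo `3`: two vertices are adjacent iff they
lie in different residue classes. -/
def completeBalancedTripartite (n : ℕ) : SimpleGraph (Fin n) where
  Adj v w := (v : ℕ) % 3 ≠ (w : ℕ) % 3
  symm := ⟨fun _ _ h => Ne.symm h⟩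
  loopless := ⟨fun _ h => h rfl⟩

instance (n : ℕ) : DecidableRel (completeBalancedTripartite n).Adj :=
  fun v w => inferInstanceAs (Decidable ((v : ℕ) % 3 ≠ (w : ℕ) % 3))

/-- Auxiliary graph: edges of the tripartite graph lying within `S` or within `Sᶜ`. -/
def sideGraph (n : ℕ) (S : Finset (Fin n)) : SimpleGraph (Fin n) where
  Adj v w := ¬ (v : ℕ) % 3 = (w : ℕ) % 3 ∧ (v ∈ S ↔ w ∈ S)
  symm := ⟨fun _ _ h => ⟨fun q => h.1 q.symm, h.2.symm⟩⟩
  loopless := ⟨fun _ h => h.1 rfl⟩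

instance (n : ℕ) (S : Finset (Fin n)) : DecidableRel (sideGraph n S).Adj :=
  fun v w => inferInstanceAs (Decidable (¬ (v : ℕ) % 3 = (w : ℕ) % 3 ∧ (v ∈ S ↔ w ∈ S)))

private lemma resClass_card (m i : ℕ) (hi : i < 3) :
    (Finset.univ.filter (fun v : Fin (3 * m) => (v : ℕ) % 3 = i)).card = m := by
  conv_rhs => rw [← Finset.card_range m]
  refine Finset.card_bij (fun (v : Fin (3*m)) _ => (v : ℕ) / 3) ?_ ?_ ?_
  · intro v hv
    simp only [Finset.mem_filter, Finset.mem_univ, true_and] at hv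
    have := v.isLt
    simp only [Finset.mem_range]
    omega
  · intro v hv w hw hvw
    simp only [Finset.mem_filter, Finset.mem_univ, true_and] at hv hw
    have h1 := v.isLt; have h2 := w.isLt
    have hvw' : (v : ℕ) / 3 = (w : ℕ) / 3 := hvw
    apply Fin.ext; omega
  · intro k hk
    simp only [Finset.mem_range] at hk
    refine ⟨⟨3*k+i, by omega⟩, ?_, ?_⟩
    · simp only [Finset.mem_filter, Finset.mem_univ, true_and]; omega
    · show (3 * k + i) / 3 = k; omega

private lemma core (m a0 a1 a2 : ℤ) (n0 : 0 ≤ a0) (n1 : 0 ≤ a1) (n2 : 0 ≤ a2)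
    (m0 : a0 ≤ m) (m1 : a1 ≤ m) (m2 : a2 ≤ m) :
    2 * (3 * m) ^ 2 ≤
      9 * (a0 * (a0 + a1 + a2 - a0) + a1 * (a0 + a1 + a2 - a1) + a2 * (a0 + a1 + a2 - a2) +
        (m - a0) * (3 * m - (a0 + a1 + a2) - (m - a0)) +
        (m - a1) * (3 * m - (a0 + a1 + a2) - (m - a1)) +
        (m - a2) * (3 * m - (a0 + a1 + a2) - (m - a2))) := by
  rcases le_total (a0 + a1) m with h | h
  · nlinarith [mul_nonneg n0 n1,
      mul_nonneg (by linarith : (0:ℤ) ≤ m - a2) (by linarith : (0:ℤ) ≤ m - a0 - a1)]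
  · nlinarith [mul_nonneg (by linarith : (0:ℤ) ≤ m - a0) (by linarith : (0:ℤ) ≤ m - a1),
      mul_nonneg n2 (by linarith : (0:ℤ) ≤ a0 + a1 - m)]

private lemma key (m s t a0 a1 a2 b0 b1 b2 c0 c1 c2 e0 e1 e2 : ℕ)
    (h0 : a0 + b0 = m) (h1 : a1 + b1 = m) (h2 : a2 + b2 = m)
    (hc0 : a0 + c0 = s) (hc1 : a1 + c1 = s) (hc2 : a2 + c2 = s)
    (he0 : b0 + e0 = t) (he1 : b1 + e1 = t) (he2 : b2 + e2 = t)
    (hsa : a0 + a1 + a2 = s) (htb : b0 + b1 + b2 = t) :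
    2 * (3 * m) ^ 2 ≤ 9 * (a0*c0 + a1*c1 + a2*c2 + b0*e0 + b1*e1 + b2*e2) := by
  zify
  have ec0 : (c0 : ℤ) = a0 + a1 + a2 - a0 := by omega
  have ec1 : (c1 : ℤ) = a0 + a1 + a2 - a1 := by omega
  have ec2 : (c2 : ℤ) = a0 + a1 + a2 - a2 := by omega
  have eb0 : (b0 : ℤ) = m - a0 := by omega
  have eb1 : (b1 : ℤ) = m - a1 := by omega
  have eb2 : (b2 : ℤ) = m - a2 := by omega
  have ee0 : (e0 : ℤ) = 3*m - (a0 + a1 + a2) - (m - a0) := by omega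
  have ee1 : (e1 : ℤ) = 3*m - (a0 + a1 + a2) - (m - a1) := by omega
  have ee2 : (e2 : ℤ) = 3*m - (a0 + a1 + a2) - (m - a2) := by omega
  rw [ec0, ec1, ec2, ee0, ee1, ee2, eb0, eb1, eb2]
  exact core m a0 a1 a2 (Int.natCast_nonneg _) (Int.natCast_nonneg _) (Int.natCast_nonneg _)
    (by omega) (by omega) (by omega)

private lemma degS (n : ℕ) (S : Finset (Fin n)) (v : Fin n) (hv : v ∈ S) :
    (sideGraph n S).degree v = (S.filter (fun w : Fin n => ¬ (w : ℕ) % 3 = (v : ℕ) % 3)).card := by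
  rw [← SimpleGraph.card_neighborFinset_eq_degree]
  congr 1
  ext w
  simp only [SimpleGraph.mem_neighborFinset, Finset.mem_filter]
  simp only [sideGraph]
  constructor
  · rintro ⟨h1, h2⟩; exact ⟨h2.mp hv, fun q => h1 q.symm⟩
  · rintro ⟨hw, h1⟩; exact ⟨fun q => h1 q.symm, ⟨fun _ => hw, fun _ => hv⟩⟩

private lemma degSc (n : ℕ) (S : Finset (Fin n)) (v : Fin n) (hv : v ∈ Sᶜ) :
    (sideGraph n S).degree v = (Sᶜ.filter (fun w : Fin n => ¬ (w : ℕ) % 3 = (v : ℕ) % 3)).card := by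
  rw [← SimpleGraph.card_neighborFinset_eq_degree]
  congr 1
  ext w
  rw [Finset.mem_compl] at hv
  simp only [SimpleGraph.mem_neighborFinset, Finset.mem_filter, Finset.mem_compl]
  simp only [sideGraph]
  constructor
  · rintro ⟨h1, h2⟩; exact ⟨fun hw => hv (h2.mpr hw), fun q => h1 q.symm⟩
  · rintro ⟨hw, h1⟩; exact ⟨fun q => h1 q.symm, ⟨fun hvS => absurd hvS hv, fun hwS => absurd hwS hw⟩⟩

private lemma sum_part (n : ℕ) (T : Finset (Fin n)) (f : Fin n → ℕ)
    (g : ℕ → ℕ) (hf : ∀ v ∈ T, f v = g ((v : ℕ) % 3)) :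
    ∑ v ∈ T, f v = ∑ i ∈ Finset.range 3,
      (T.filter (fun v : Fin n => (v : ℕ) % 3 = i)).card * g i := by
  rw [← Finset.sum_fiberwise_of_maps_to (g := fun v : Fin n => (v : ℕ) % 3)
    (t := Finset.range 3) (fun v _ => Finset.mem_range.mpr (Nat.mod_lt _ (by norm_num)))]
  refine Finset.sum_congr rfl fun i _ => ?_
  have : ∀ v ∈ T.filter (fun v : Fin n => (v : ℕ) % 3 = i), f v = g i := by
    intro v hv
    rw [Finset.mem_filter] at hv
    rw [hf v hv.1, hv.2]
  rw [Finset.sum_congr rfl this, Finset.sum_const, smul_eq_mul, mul_comm]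

private lemma filter_compl_card (n : ℕ) (S : Finset (Fin n)) (p : Fin n → Prop)
    [DecidablePred p] :
    (S.filter p).card + (Sᶜ.filter p).card = (Finset.univ.filter p).card := by
  rw [← Finset.card_union_of_disjoint
    (Finset.disjoint_filter_filter disjoint_compl_right)]
  congr 1
  ext v
  simp only [Finset.mem_union, Finset.mem_filter, Finset.mem_compl, Finset.mem_univ, true_and]
  tauto

open Classical in
/-- For `n` divisible by `3`, the complete balanced tripartite graph
`K_{n/3,n/3,n/3}` is `K₄`-free, and every balanced bipartition of its vertex
set leaves at least `n² / 9` edges inside the two parts. -/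
theorem completeBalancedTripartite_tight (n : ℕ) (hn : 3 ∣ n) :
    (completeBalancedTripartite n).CliqueFree 4 ∧
    ∀ S : Finset (Fin n), S.card = n / 2 →
      (n ^ 2 / 9 : ℝ) ≤
        (((completeBalancedTripartite n).edgeFinset.filter
          (fun e => (∀ v ∈ e, v ∈ S) ∨ (∀ v ∈ e, v ∉ S))).card : ℝ) := by
  obtain ⟨m, rfl⟩ := hn
  constructor
  · intro t ht
    have hsub : ∀ v ∈ t, (v : ℕ) % 3 ∈ Finset.range 3 :=
      fun v _ => Finset.mem_range.mpr (Nat.mod_lt _ (by norm_num))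
    have hcard : (Finset.range 3).card < t.card := by
      rw [ht.card_eq, Finset.card_range]; norm_num
    obtain ⟨v, hv, w, hw, hne, heq⟩ :=
      Finset.exists_ne_map_eq_of_card_lt_of_maps_to hcard hsub
    exact (ht.1 hv hw hne : (v : ℕ) % 3 ≠ (w : ℕ) % 3) heq
  · intro S hS
    have hFH : ((completeBalancedTripartite (3*m)).edgeFinset.filter
          (fun e => (∀ v ∈ e, v ∈ S) ∨ (∀ v ∈ e, v ∉ S)))
        = (sideGraph (3*m) S).edgeFinset := by
      ext e
      induction e using Sym2.ind with
      | _ v w =>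
        simp only [Finset.mem_filter, SimpleGraph.mem_edgeFinset, SimpleGraph.mem_edgeSet]
        simp only [Finset.mem_filter, SimpleGraph.mem_edgeFinset, SimpleGraph.mem_edgeSet,
          Sym2.mem_iff, completeBalancedTripartite, sideGraph, Ne, forall_eq_or_imp, forall_eq]
        constructor
        · rintro ⟨h1, h2⟩
          refine ⟨h1, ?_⟩
          rcases h2 with ⟨ha, hb⟩ | ⟨ha, hb⟩
          · exact ⟨fun _ => hb, fun _ => ha⟩
          · exact ⟨fun q => absurd q ha, fun q => absurd q hb⟩
        · rintro ⟨h1, h2⟩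
          refine ⟨h1, ?_⟩
          by_cases hv : v ∈ S
          · exact Or.inl ⟨hv, h2.mp hv⟩
          · exact Or.inr ⟨hv, fun q => hv (h2.mpr q)⟩
    rw [hFH]
    have hhs := SimpleGraph.sum_degrees_eq_twice_card_edges (sideGraph (3*m) S)
    have hsplit := Finset.sum_add_sum_compl S (fun v => (sideGraph (3*m) S).degree v)
    have h1 : ∑ v ∈ S, (sideGraph (3*m) S).degree v
        = ∑ i ∈ Finset.range 3,
            (S.filter (fun v : Fin (3*m) => (v : ℕ) % 3 = i)).card *
            (S.filter (fun w : Fin (3*m) => ¬ (w : ℕ) % 3 = i)).card :=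
      sum_part (3*m) S _ (fun i => (S.filter (fun w : Fin (3*m) => ¬ (w : ℕ) % 3 = i)).card)
        (fun v hv => degS (3*m) S v hv)
    have h2 : ∑ v ∈ Sᶜ, (sideGraph (3*m) S).degree v
        = ∑ i ∈ Finset.range 3,
            (Sᶜ.filter (fun v : Fin (3*m) => (v : ℕ) % 3 = i)).card *
            (Sᶜ.filter (fun w : Fin (3*m) => ¬ (w : ℕ) % 3 = i)).card :=
      sum_part (3*m) Sᶜ _ (fun i => (Sᶜ.filter (fun w : Fin (3*m) => ¬ (w : ℕ) % 3 = i)).card)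
        (fun v hv => degSc (3*m) S v hv)
    have hab : ∀ i, i < 3 →
        (S.filter (fun v : Fin (3*m) => (v : ℕ) % 3 = i)).card +
        (Sᶜ.filter (fun v : Fin (3*m) => (v : ℕ) % 3 = i)).card = m := by
      intro i hi
      rw [filter_compl_card, resClass_card m i hi]
    have hac : ∀ i,
        (S.filter (fun v : Fin (3*m) => (v : ℕ) % 3 = i)).card +
        (S.filter (fun w : Fin (3*m) => ¬ (w : ℕ) % 3 = i)).card = S.card := fun i =>
      Finset.card_filter_add_card_filter_not _
    have hbe : ∀ i,
        (Sᶜ.filter (fun v : Fin (3*m) => (v : ℕ) % 3 = i)).card +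
        (Sᶜ.filter (fun w : Fin (3*m) => ¬ (w : ℕ) % 3 = i)).card = Sᶜ.card := fun i =>
      Finset.card_filter_add_card_filter_not _
    have hsa : ∑ i ∈ Finset.range 3,
        (S.filter (fun v : Fin (3*m) => (v : ℕ) % 3 = i)).card = S.card :=
      (Finset.card_eq_sum_card_fiberwise
        (fun v _ => Finset.mem_range.mpr (Nat.mod_lt _ (by norm_num)))).symm
    have htb : ∑ i ∈ Finset.range 3,
        (Sᶜ.filter (fun v : Fin (3*m) => (v : ℕ) % 3 = i)).card = Sᶜ.card :=
      (Finset.card_eq_sum_card_fiberwise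
        (fun v _ => Finset.mem_range.mpr (Nat.mod_lt _ (by norm_num)))).symm
    simp only [Finset.sum_range_succ, Finset.sum_range_zero, zero_add] at h1 h2 hsa htb
    have hkey := key m S.card Sᶜ.card
      (S.filter (fun v : Fin (3*m) => (v : ℕ) % 3 = 0)).card
      (S.filter (fun v : Fin (3*m) => (v : ℕ) % 3 = 1)).card
      (S.filter (fun v : Fin (3*m) => (v : ℕ) % 3 = 2)).card
      (Sᶜ.filter (fun v : Fin (3*m) => (v : ℕ) % 3 = 0)).card
      (Sᶜ.filter (fun v : Fin (3*m) => (v : ℕ) % 3 = 1)).card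
      (Sᶜ.filter (fun v : Fin (3*m) => (v : ℕ) % 3 = 2)).card
      (S.filter (fun w : Fin (3*m) => ¬ (w : ℕ) % 3 = 0)).card
      (S.filter (fun w : Fin (3*m) => ¬ (w : ℕ) % 3 = 1)).card
      (S.filter (fun w : Fin (3*m) => ¬ (w : ℕ) % 3 = 2)).card
      (Sᶜ.filter (fun w : Fin (3*m) => ¬ (w : ℕ) % 3 = 0)).card
      (Sᶜ.filter (fun w : Fin (3*m) => ¬ (w : ℕ) % 3 = 1)).card
      (Sᶜ.filter (fun w : Fin (3*m) => ¬ (w : ℕ) % 3 = 2)).card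
      (hab 0 (by norm_num)) (hab 1 (by norm_num)) (hab 2 (by norm_num))
      (hac 0) (hac 1) (hac 2) (hbe 0) (hbe 1) (hbe 2) hsa htb
    have hfin : 2 * (3*m)^2 ≤ 9 * (2 * (sideGraph (3*m) S).edgeFinset.card) := by
      rw [← hhs, ← hsplit, h1, h2]
      linarith [hkey]
    have hfin2 : (3*m)^2 ≤ 9 * (sideGraph (3*m) S).edgeFinset.card := by
      omega
    rw [div_le_iff₀ (by norm_num : (0:ℝ) < 9)]
    calc ((3*m : ℕ) : ℝ)^2 ≤ ((9 * (sideGraph (3*m) S).edgeFinset.card : ℕ) : ℝ) := by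
          exact_mod_cast hfin2
      _ = ((sideGraph (3*m) S).edgeFinset.card : ℝ) * 9 := by push_cast; ring
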